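/- Let T ⊆ ℝⁿ be a simplex with vertex at the origin of dimension n−1 contained in e_nᐩ (the hyperplane orthogonal to e_n), and let Z be an SL(n) contravariant map from origin-vertex simplices to C(ℝⁿ \ {o}). Then for x = (x₁,...,x_n) with x_n ≠ 0, Z(T)(x) = Z(T)(x_n e_n); and for x ≠ o with x_n = 0, Z(T)(x) = lim_{t→0} Z(T)(t e_n). -/

import Mathlib

/-!
Shears `y ↦ y + yₙ a` with `aₙ = 0` lie in `SL(n)`, fix `T ⊆ eₙ⊥` pointwise and carry `xₙ eₙ`
to any `x` with the same nonzero last coordinate, so by contravariance `Z(T)` is constant on each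
affine hyperplane `{xₙ = c}`, `c ≠ 0`. For `xₙ = 0`, approach `x` along `x + t eₙ` and use
continuity of `Z(T)` at `x`.
-/

/-- A simplex in `ℝⁿ` with one vertex at the origin (possibly lower-dimensional,
possibly `{o}`). -/
def IsOriginSimplex {n : ℕ} (T : Set (Fin n → ℝ)) : Prop :=
  ∃ S : Finset (Fin n → ℝ),
    AffineIndependent ℝ
      (Subtype.val : (insert (0 : Fin n → ℝ) (S : Set (Fin n → ℝ)) : Set (Fin n → ℝ))
        → (Fin n → ℝ)) ∧
    T = convexHull ℝ (insert (0 : Fin n → ℝ) (S : Set (Fin n → ℝ)))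

open Filter Topology

namespace Matrix.SpecialLinearGroup

variable {ι : Type*} [Fintype ι] [DecidableEq ι]

section Shear

variable {R : Type*} [CommRing R] (i : ι) {a : ι → R} (ha : a i = 0)

/-- The shear `y ↦ y + yᵢ a`; it has determinant `1 + aᵢ = 1`. -/
def shear : SpecialLinearGroup ι R :=
  ⟨1 + vecMulVec a (Pi.single i 1), by
    rw [vecMulVec_eq Unit, det_one_add_replicateCol_mul_replicateRow, single_dotProduct, ha,
      mul_zero, add_zero]⟩

theorem shear_smul (y : ι → R) : shear i ha • y = y + y i • a := by
  change (1 + vecMulVec a (Pi.single i 1)) *ᵥ y = _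
  rw [add_mulVec, one_mulVec]
  congr 1
  ext j
  simp [mulVec, dotProduct, vecMulVec_apply, Pi.single_apply, mul_comm]

theorem shear_smul_of_apply_eq_zero {y : ι → R} (hy : y i = 0) : shear i ha • y = y := by
  rw [shear_smul, hy, zero_smul, add_zero]

end Shear

theorem exists_fixes_hyperplane_and_smul_single_eq {K : Type*} [Field K] (i : ι) {x : ι → K}
    (hx : x i ≠ 0) :
    ∃ φ : SpecialLinearGroup ι K, (∀ y : ι → K, y i = 0 → φ • y = y) ∧
      φ • (x i • Pi.single i 1) = x := by
  set a : ι → K := (x i)⁻¹ • (x - x i • Pi.single i 1)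
  have ha : a i = 0 := by simp [a]
  refine ⟨shear i ha, fun y hy => shear_smul_of_apply_eq_zero i ha hy, ?_⟩
  rw [shear_smul]
  simp [a, smul_inv_smul₀ hx]

end Matrix.SpecialLinearGroup

theorem tendsto_nhdsNE_of_continuousAt_add_smul {E X : Type*} [TopologicalSpace E] [AddCommGroup E]
    [Module ℝ E] [ContinuousAdd E] [ContinuousSMul ℝ E] [TopologicalSpace X]
    {f : E → X} {g : ℝ → X} {x : E} (v : E) (hf : ContinuousAt f x)
    (hfg : ∀ t ≠ 0, f (x + t • v) = g t) : Tendsto g (𝓝[≠] 0) (𝓝 (f x)) := by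
  have hline : Tendsto (fun t : ℝ => x + t • v) (𝓝 0) (𝓝 x) := by
    simpa using ((continuous_id.smul continuous_const).const_add x).tendsto (0 : ℝ)
  refine ((hf.tendsto.comp hline).mono_left nhdsWithin_le_nhds).congr' ?_
  filter_upwards [self_mem_nhdsWithin] with t ht using hfg t ht

def IsSLContravariant {n : ℕ} (Z : Set (Fin n → ℝ) → (Fin n → ℝ) → ℝ) : Prop :=
  ∀ (φ : Matrix.SpecialLinearGroup (Fin n) ℝ) (T : Set (Fin n → ℝ)),
    IsOriginSimplex T → ∀ x : Fin n → ℝ, x ≠ 0 →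
      Z ((fun y => (φ : Matrix (Fin n) (Fin n) ℝ).mulVec y) '' T) x
        = Z T ((↑(φ⁻¹) : Matrix (Fin n) (Fin n) ℝ).mulVec x)

theorem IsSLContravariant.apply_smul_of_forall_smul_eq {n : ℕ}
    {Z : Set (Fin n → ℝ) → (Fin n → ℝ) → ℝ} (hZ : IsSLContravariant Z)
    {T : Set (Fin n → ℝ)} (hT : IsOriginSimplex T) {φ : Matrix.SpecialLinearGroup (Fin n) ℝ}
    (hφ : ∀ y ∈ T, φ • y = y) {v : Fin n → ℝ} (hv : φ • v ≠ 0) :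
    Z T (φ • v) = Z T v := by
  have hφT : (fun y => (φ : Matrix (Fin n) (Fin n) ℝ).mulVec y) '' T = T :=
    Set.EqOn.image_eq_self hφ
  have h := hZ φ T hT (φ • v) hv
  rwa [hφT, show (↑(φ⁻¹) : Matrix (Fin n) (Fin n) ℝ).mulVec (φ • v) = φ⁻¹ • φ • v from rfl,
    inv_smul_smul] at h

/-- For an `(n-1)`-dimensional origin simplex `T ⊆ eₙ⊥` and `Z` `SL(n)` contravariant
with values in `C(ℝⁿ \ {o})`: if `xₙ ≠ 0` then `Z T x = Z T (xₙ eₙ)`, while if `x ≠ o`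
and `xₙ = 0` then `Z T x = lim_{t→0} Z T (t eₙ)`. -/
theorem contravariant_hyperplane_case {n : ℕ} (hn : 3 ≤ n)
    (Z : Set (Fin n → ℝ) → (Fin n → ℝ) → ℝ)
    (hcont : ∀ T : Set (Fin n → ℝ), IsOriginSimplex T →
      ContinuousOn (Z T) {x : Fin n → ℝ | x ≠ 0})
    (hcontra : ∀ (φ : Matrix.SpecialLinearGroup (Fin n) ℝ) (T : Set (Fin n → ℝ)),
      IsOriginSimplex T → ∀ x : Fin n → ℝ, x ≠ 0 →
        Z ((fun y => (φ : Matrix (Fin n) (Fin n) ℝ).mulVec y) '' T) x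
          = Z T ((↑(φ⁻¹) : Matrix (Fin n) (Fin n) ℝ).mulVec x))
    (T : Set (Fin n → ℝ)) (hT : IsOriginSimplex T)
    (hsub : T ⊆ {x : Fin n → ℝ | x ⟨n - 1, by omega⟩ = 0}) :
    (∀ x : Fin n → ℝ, x ⟨n - 1, by omega⟩ ≠ 0 →
      Z T x = Z T (x ⟨n - 1, by omega⟩ • (Pi.single (⟨n - 1, by omega⟩ : Fin n) 1 : Fin n → ℝ))) ∧
    (∀ x : Fin n → ℝ, x ≠ 0 → x ⟨n - 1, by omega⟩ = 0 →
      Filter.Tendsto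
        (fun t : ℝ => Z T (t • (Pi.single (⟨n - 1, by omega⟩ : Fin n) 1 : Fin n → ℝ)))
        (nhdsWithin 0 {t : ℝ | t ≠ 0}) (nhds (Z T x))) := by
  set i : Fin n := ⟨n - 1, by omega⟩
  have off_hyperplane : ∀ x : Fin n → ℝ, x i ≠ 0 → Z T x = Z T (x i • Pi.single i 1) := by
    intro x hx
    obtain ⟨φ, hφ, hφx⟩ := Matrix.SpecialLinearGroup.exists_fixes_hyperplane_and_smul_single_eq i hx
    have hx0 : φ • (x i • Pi.single i 1) ≠ 0 := by
      rw [hφx]; rintro rfl; exact hx rfl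
    calc Z T x = Z T (φ • (x i • Pi.single i 1)) := by rw [hφx]
      _ = Z T (x i • Pi.single i 1) :=
        IsSLContravariant.apply_smul_of_forall_smul_eq hcontra hT (fun y hy => hφ y (hsub hy)) hx0
  refine ⟨off_hyperplane, fun x hx0 hxi => ?_⟩
  refine tendsto_nhdsNE_of_continuousAt_add_smul (Pi.single i 1)
    ((hcont T hT).continuousAt (isOpen_ne.mem_nhds hx0)) fun t ht => ?_
  have hti : (x + t • (Pi.single i 1 : Fin n → ℝ)) i = t := by simp [hxi]
  rw [off_hyperplane _ (hti.symm ▸ ht), hti]
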